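/- arXiv:2203.16575 — 3 statements merged into one kernel-verified Lean document; each statement's English description precedes it below -/
import Mathlib

section
/- Suppose the sequences (y_i, u_i, d_i) satisfy the normalized first-order pool dynamics. Then for every k with 2 ≤ k ≤ N, every real number α, and every t ∈ ℤ, the non-causal control expression equals its causal rewriting: (1−α)·( y_k[t+τ̄] + u_k[t−τ_k] ) + d_k[t] − α·[ Σ_{i=1}^{k−1} ( y_i[t+τ̄] + Σ_{s=1}^{τ_i} u_i[t−s] ) + D_k[t+σ_k] + Σ_{i=1}^{k−1} Σ_{s=0}^{τ_i−1} D_i[t+σ_i+s] ] = (1−α)·p_k[t] − α·m_{k−1}[t]. -/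
/-- Cumulative delay `σ_i = Σ_{j=1}^{i-1} τ_j`. -/
def sigmaDelay (τ : ℕ → ℕ) (i : ℕ) : ℕ := ∑ j ∈ Finset.Icc 1 (i - 1), τ j

/-- Aggregate disturbance `D_i[t] = Σ_{j=1}^{i} d_j[t - σ_j]`. -/
def Dagg (τ : ℕ → ℕ) (d : ℕ → ℤ → ℝ) (i : ℕ) (t : ℤ) : ℝ :=
  ∑ j ∈ Finset.Icc 1 i, d j (t - (sigmaDelay τ j : ℤ))

/-- Predicted level
`p_k[t] = y_k[t] + Σ_{s=τ_k}^{τ_k+τ̄} u_k[t-s] - Σ_{s=1}^{τ̄} u_{k-1}[t-s] + Σ_{s=0}^{τ̄} d_k[t-s]`. -/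
def pPred (τ : ℕ → ℕ) (τbar : ℕ) (y u d : ℕ → ℤ → ℝ) (k : ℕ) (t : ℤ) : ℝ :=
  y k t + ∑ s ∈ Finset.Icc (τ k) (τ k + τbar), u k (t - (s : ℤ))
    - ∑ s ∈ Finset.Icc 1 τbar, u (k - 1) (t - (s : ℤ))
    + ∑ s ∈ Finset.Icc 0 τbar, d k (t - (s : ℤ))

/-- Aggregate level
`m_k[t] = Σ_{i=1}^{k} ( y_i[t] + Σ_{s=τ̄+1}^{τ_i+τ̄} u_i[t-s] + Σ_{s=1}^{τ̄} d_i[t-s]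
  + Σ_{s=0}^{τ_i-1} D_i[t+σ_i+s] ) + Σ_{s=1}^{τ̄} u_k[t-s] + D_k[t+σ_{k+1}]`. -/
def mAgg (τ : ℕ → ℕ) (τbar : ℕ) (y u d : ℕ → ℤ → ℝ) (k : ℕ) (t : ℤ) : ℝ :=
  (∑ i ∈ Finset.Icc 1 k,
    (y i t + ∑ s ∈ Finset.Icc (τbar + 1) (τ i + τbar), u i (t - (s : ℤ))
      + ∑ s ∈ Finset.Icc 1 τbar, d i (t - (s : ℤ))
      + ∑ s ∈ Finset.range (τ i), Dagg τ d i (t + (sigmaDelay τ i : ℤ) + (s : ℤ))))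
  + ∑ s ∈ Finset.Icc 1 τbar, u k (t - (s : ℤ))
  + Dagg τ d k (t + (sigmaDelay τ (k + 1) : ℤ))

lemma sum_Icc_zero' (f : ℕ → ℝ) (n : ℕ) :
    ∑ s ∈ Finset.Icc 0 n, f s = f 0 + ∑ s ∈ Finset.Icc 1 n, f s := by
  have h : Finset.Icc 0 n = insert 0 (Finset.Icc 1 n) := by
    ext x; simp; omega
  rw [h, Finset.sum_insert (by simp)]

lemma sum_Icc_shift' (f : ℕ → ℝ) (c a b : ℕ) :
    ∑ s ∈ Finset.Icc (c + a) (c + b), f s = ∑ s ∈ Finset.Icc a b, f (c + s) := by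
  rw [← Finset.map_add_left_Icc, Finset.sum_map]; rfl

lemma sum_Icc_split' (f : ℕ → ℝ) (a b : ℕ) :
    ∑ s ∈ Finset.Icc 1 (a + b), f s
      = ∑ s ∈ Finset.Icc 1 a, f s + ∑ s ∈ Finset.Icc 1 b, f (a + s) := by
  have h1 : Finset.Icc 1 (a + b) = Finset.Icc 1 a ∪ Finset.Icc (a + 1) (a + b) := by
    ext x; simp; omega
  have hd : Disjoint (Finset.Icc 1 a) (Finset.Icc (a + 1) (a + b)) := by
    rw [Finset.disjoint_left]; intro x hx hx'; simp at hx hx'; omega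
  rw [h1, Finset.sum_union hd,
    show ∑ s ∈ Finset.Icc (a+1) (a+b), f s
      = ∑ s ∈ Finset.Icc 1 b, f (a + s) from sum_Icc_shift' f a 1 b]

lemma sum_range_eq_Icc' (f : ℕ → ℝ) (n : ℕ) :
    ∑ j ∈ Finset.range n, f j = ∑ s ∈ Finset.Icc 1 n, f (n - s) := by
  refine Finset.sum_nbij' (fun j => n - j) (fun s => n - s) ?_ ?_ ?_ ?_ ?_ <;>
    intro a ha <;> simp_all
  · omega
  · omega
  · omega
  · omega
  · congr 1; omega

/-- under the normalized first-order pool dynamics, the non-causal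
control expression equals its causal rewriting `(1-α)·p_k[t] - α·m_{k-1}[t]`. -/
theorem stmt2
    (N : ℕ) (τ : ℕ → ℕ) (τbar : ℕ)
    (y u d : ℕ → ℤ → ℝ)
    (hu0 : ∀ t : ℤ, u 0 t = 0)
    (hdyn : ∀ i, 1 ≤ i → i ≤ N → ∀ t : ℤ,
      y i (t + 1) = y i t + u i (t - (τ i : ℤ) - (τbar : ℤ))
        - u (i - 1) (t - (τbar : ℤ)) + d i (t - (τbar : ℤ))) :
    ∀ k, 2 ≤ k → k ≤ N → ∀ α : ℝ, ∀ t : ℤ,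
      (1 - α) * (y k (t + (τbar : ℤ)) + u k (t - (τ k : ℤ))) + d k t
        - α * ((∑ i ∈ Finset.Icc 1 (k - 1),
                  (y i (t + (τbar : ℤ)) + ∑ s ∈ Finset.Icc 1 (τ i), u i (t - (s : ℤ))))
          + Dagg τ d k (t + (sigmaDelay τ k : ℤ))
          + ∑ i ∈ Finset.Icc 1 (k - 1), ∑ s ∈ Finset.range (τ i),
              Dagg τ d i (t + (sigmaDelay τ i : ℤ) + (s : ℤ)))
      = (1 - α) * pPred τ τbar y u d k t - α * mAgg τ τbar y u d (k - 1) t := by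
  intro k hk2 hkN α t
  have hk1 : 1 ≤ k := by omega
  -- telescoping of the dynamics
  have htel : ∀ i, 1 ≤ i → i ≤ N → ∀ t0 : ℤ, ∀ n : ℕ,
      y i (t0 + (n : ℤ)) = y i t0 + ∑ j ∈ Finset.range n,
        (u i (t0 + (j:ℤ) - (τ i : ℤ) - (τbar : ℤ)) - u (i-1) (t0 + (j:ℤ) - (τbar : ℤ))
          + d i (t0 + (j:ℤ) - (τbar : ℤ))) := by
    intro i hi1 hiN t0 n
    induction n with
    | zero => simp
    | succ n ih =>
      have h1 : t0 + ((n+1 : ℕ) : ℤ) = (t0 + (n:ℤ)) + 1 := by push_cast; ring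
      rw [h1, hdyn i hi1 hiN (t0 + (n:ℤ)), ih, Finset.sum_range_succ]
      ring
  have hy : ∀ i, 1 ≤ i → i ≤ N →
      y i (t + (τbar : ℤ)) = y i t + ∑ s ∈ Finset.Icc 1 τbar,
        (u i (t - (τ i : ℤ) - (s:ℤ)) - u (i-1) (t - (s:ℤ)) + d i (t - (s:ℤ))) := by
    intro i hi1 hiN
    rw [htel i hi1 hiN t τbar,
      sum_range_eq_Icc' (fun j => u i (t + (j:ℤ) - (τ i : ℤ) - (τbar : ℤ))
        - u (i-1) (t + (j:ℤ) - (τbar : ℤ)) + d i (t + (j:ℤ) - (τbar : ℤ))) τbar]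
    congr 1
    apply Finset.sum_congr rfl
    intro s hs
    simp only [Finset.mem_Icc] at hs
    have e1 : t + ((τbar - s : ℕ) : ℤ) - (τ i : ℤ) - (τbar:ℤ) = t - (τ i : ℤ) - (s:ℤ) := by
      omega
    have e2 : t + ((τbar - s : ℕ) : ℤ) - (τbar:ℤ) = t - (s:ℤ) := by omega
    rw [e1, e2]
  obtain ⟨K, rfl⟩ : ∃ K, k = K + 1 := ⟨k - 1, by omega⟩
  simp only [Nat.add_sub_cancel] at *
  have hK1 : 1 ≤ K := by omega
  -- predicted level
  have EqP : pPred τ τbar y u d (K+1) t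
      = y (K+1) (t + (τbar:ℤ)) + u (K+1) (t - (τ (K+1) : ℤ)) + d (K+1) t := by
    unfold pPred
    rw [hy (K+1) (by omega) hkN]
    rw [show Finset.Icc (τ (K+1)) (τ (K+1) + τbar)
        = Finset.Icc (τ (K+1) + 0) (τ (K+1) + τbar) by norm_num,
      sum_Icc_shift' (fun s => u (K+1) (t - (s:ℤ))) (τ (K+1)) 0 τbar,
      sum_Icc_zero' (fun s => u (K+1) (t - ((τ (K+1) + s : ℕ):ℤ))) τbar,
      sum_Icc_zero' (fun s => d (K+1) (t - (s:ℤ))) τbar,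
      Finset.sum_add_distrib, Finset.sum_sub_distrib]
    have h1 : ∑ s ∈ Finset.Icc 1 τbar, u (K+1) (t - ((τ (K+1) + s : ℕ):ℤ))
        = ∑ s ∈ Finset.Icc 1 τbar, u (K+1) (t - (τ (K+1):ℤ) - (s:ℤ)) := by
      apply Finset.sum_congr rfl; intro s _; congr 1; push_cast; ring
    rw [h1]
    simp only [Nat.add_zero, Nat.cast_zero, sub_zero, Nat.add_sub_cancel]
    ring
  -- Dagg split
  have EqDagg : Dagg τ d (K+1) (t + (sigmaDelay τ (K+1) : ℤ))
      = Dagg τ d K (t + (sigmaDelay τ (K+1) : ℤ)) + d (K+1) t := by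
    unfold Dagg
    rw [Finset.sum_Icc_succ_top (Nat.succ_le_succ (Nat.zero_le K))]
    congr 1
    congr 1
    ring
  -- per-pool identity
  have per_i : ∀ i ∈ Finset.Icc 1 K,
      y i (t + (τbar:ℤ)) + ∑ s ∈ Finset.Icc 1 (τ i), u i (t - (s:ℤ))
      = (y i t + ∑ s ∈ Finset.Icc (τbar+1) (τ i + τbar), u i (t - (s:ℤ))
        + ∑ s ∈ Finset.Icc 1 τbar, d i (t - (s:ℤ)))
        + ((∑ s ∈ Finset.Icc 1 τbar, u i (t - (s:ℤ)))
          - ∑ s ∈ Finset.Icc 1 τbar, u (i-1) (t - (s:ℤ))) := by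
    intro i hi
    simp only [Finset.mem_Icc] at hi
    rw [hy i hi.1 (by omega)]
    have hA : ∑ s ∈ Finset.Icc 1 (τ i + τbar), u i (t - (s:ℤ))
        = ∑ s ∈ Finset.Icc 1 (τ i), u i (t - (s:ℤ))
          + ∑ s ∈ Finset.Icc 1 τbar, u i (t - ((τ i + s : ℕ):ℤ)) :=
      sum_Icc_split' (fun s => u i (t - (s:ℤ))) (τ i) τbar
    have hB : ∑ s ∈ Finset.Icc 1 (τ i + τbar), u i (t - (s:ℤ))
        = ∑ s ∈ Finset.Icc 1 τbar, u i (t - (s:ℤ))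
          + ∑ s ∈ Finset.Icc (τbar+1) (τ i + τbar), u i (t - (s:ℤ)) := by
      rw [show τ i + τbar = τbar + τ i from Nat.add_comm _ _,
        sum_Icc_split' (fun s => u i (t - (s:ℤ))) τbar (τ i),
        show Finset.Icc (τbar+1) (τbar + τ i)
          = Finset.Icc (τbar+1) (τbar + τ i) from rfl,
        sum_Icc_shift' (fun s => u i (t - (s:ℤ))) τbar 1 (τ i)]
    have h1 : ∑ s ∈ Finset.Icc 1 τbar, u i (t - (τ i:ℤ) - (s:ℤ))
        = ∑ s ∈ Finset.Icc 1 τbar, u i (t - ((τ i + s : ℕ):ℤ)) := by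
      apply Finset.sum_congr rfl; intro s _; congr 1; push_cast; ring
    rw [Finset.sum_add_distrib, Finset.sum_sub_distrib, h1]
    have := hA.symm.trans hB
    linarith [this]
  -- telescoping sum of flows
  have tele : ∀ M : ℕ,
      ∑ i ∈ Finset.Icc 1 M, ((∑ s ∈ Finset.Icc 1 τbar, u i (t - (s:ℤ)))
        - ∑ s ∈ Finset.Icc 1 τbar, u (i-1) (t - (s:ℤ)))
      = ∑ s ∈ Finset.Icc 1 τbar, u M (t - (s:ℤ)) := by
    intro M
    induction M with
    | zero => simp [hu0]
    | succ n ih =>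
      rw [Finset.sum_Icc_succ_top (Nat.succ_le_succ (Nat.zero_le n)), ih]
      simp only [Nat.add_sub_cancel]
      ring
  have EqM : (∑ i ∈ Finset.Icc 1 K,
        (y i (t+(τbar:ℤ)) + ∑ s ∈ Finset.Icc 1 (τ i), u i (t-(s:ℤ))))
      + Dagg τ d (K+1) (t + (sigmaDelay τ (K+1):ℤ))
      + (∑ i ∈ Finset.Icc 1 K, ∑ s ∈ Finset.range (τ i),
          Dagg τ d i (t + (sigmaDelay τ i:ℤ) + (s:ℤ)))
      = mAgg τ τbar y u d K t + d (K+1) t := by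
    rw [Finset.sum_congr rfl per_i, EqDagg]
    unfold mAgg
    rw [Finset.sum_add_distrib, tele K]
    rw [show (∑ i ∈ Finset.Icc 1 K,
        (y i t + ∑ s ∈ Finset.Icc (τbar + 1) (τ i + τbar), u i (t - (s : ℤ))
          + ∑ s ∈ Finset.Icc 1 τbar, d i (t - (s : ℤ))
          + ∑ s ∈ Finset.range (τ i), Dagg τ d i (t + (sigmaDelay τ i : ℤ) + (s : ℤ))))
      = (∑ i ∈ Finset.Icc 1 K,
        (y i t + ∑ s ∈ Finset.Icc (τbar + 1) (τ i + τbar), u i (t - (s : ℤ))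
          + ∑ s ∈ Finset.Icc 1 τbar, d i (t - (s : ℤ))))
        + ∑ i ∈ Finset.Icc 1 K, ∑ s ∈ Finset.range (τ i),
            Dagg τ d i (t + (sigmaDelay τ i : ℤ) + (s : ℤ)) from Finset.sum_add_distrib]
    ring
  linear_combination (α - 1) * EqP - α * EqM
end

section
/- Let A ∈ ℝ^{n×n}, B ∈ ℝ^{n×m}, Q ∈ ℝ^{n×n} symmetric positive semidefinite, R ∈ ℝ^{m×m} symmetric positive definite, and S ∈ ℝ^{n×n} symmetric positive semidefinite satisfying the discrete algebraic Riccati equation S = A^T S A − A^T S B (B^T S B + R)^{−1} B^T S A + Q. Set K = −(B^T S B + R)^{−1} B^T S A. Then for every v ∈ ℝ^n and π ∈ ℝ^n there exists a constant c ∈ ℝ (independent of x) such that for all x ∈ ℝ^n, min over u ∈ ℝ^m of [ x^T Q x + u^T R u + (A x + B u + v)^T S (A x + B u + v) + 2 π^T (A + B K) (A x + B u + v) ] equals x^T S x + 2 Π^T (A + B K) x + c, where Π = (A + B K)^T π + S v. -/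
/-!
Write `M = BᵀSB + R` (positive definite) and `z = Ax + v`. The Bellman expression is a quadratic
`uᵀMu + 2gᵀu + c₀` in `u` with `g = Bᵀ(Sz + (A+BK)ᵀπ)`, so completing the square gives the minimum
`c₀ - gᵀM⁻¹g`, attained at `u = -M⁻¹g`. Splitting `g = BᵀSAx + BᵀΠ`, the part of `gᵀM⁻¹g`
quadratic in `x` combines with `xᵀQx + (Ax)ᵀS(Ax)` into `xᵀSx` by the Riccati equation, and since
`-M⁻¹BᵀSA = K` the mixed part turns the linear term `2Πᵀ Ax` into `2Πᵀ(A+BK)x`.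
-/

open Matrix

namespace Matrix

variable {ι κ α : Type*} [Fintype ι] [Fintype κ]

section CommRing

variable [CommRing α]

lemma dotProduct_mulVec_eq_transpose_mulVec_dotProduct (N : Matrix ι κ α) (a : ι → α)
    (b : κ → α) : a ⬝ᵥ N *ᵥ b = (Nᵀ *ᵥ a) ⬝ᵥ b := by
  rw [dotProduct_mulVec, mulVec_transpose]

lemma dotProduct_transpose_mul_mulVec {μ : Type*} [Fintype μ] (C : Matrix κ ι α)
    (D : Matrix κ μ α) (a : ι → α) (b : μ → α) : a ⬝ᵥ (Cᵀ * D) *ᵥ b = (C *ᵥ a) ⬝ᵥ D *ᵥ b := by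
  rw [← mulVec_mulVec, dotProduct_mulVec_eq_transpose_mulVec_dotProduct, transpose_transpose]

lemma IsSymm.dotProduct_mulVec_comm {N : Matrix ι ι α} (hN : N.IsSymm) (a b : ι → α) :
    a ⬝ᵥ N *ᵥ b = b ⬝ᵥ N *ᵥ a := by
  conv_lhs => rw [← hN.eq]
  exact dotProduct_transpose_mulVec N a b

lemma IsSymm.add_dotProduct_mulVec_add {N : Matrix ι ι α} (hN : N.IsSymm) (a b : ι → α) :
    (a + b) ⬝ᵥ N *ᵥ (a + b) = a ⬝ᵥ N *ᵥ a + 2 * (a ⬝ᵥ N *ᵥ b) + b ⬝ᵥ N *ᵥ b := by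
  rw [mulVec_add, dotProduct_add, add_dotProduct, add_dotProduct, hN.dotProduct_mulVec_comm b a]
  ring

end CommRing

theorem PosDef.isLeast_quadratic [DecidableEq κ] {M : Matrix κ κ ℝ} (hM : M.PosDef)
    (g : κ → ℝ) (c : ℝ) :
    IsLeast (Set.range fun u => u ⬝ᵥ M *ᵥ u + 2 * (g ⬝ᵥ u) + c) (c - g ⬝ᵥ M⁻¹ *ᵥ g) := by
  have hMsymm : M.IsSymm := isHermitian_iff_isSymm.mp hM.isHermitian
  have hMinv : M *ᵥ M⁻¹ *ᵥ g = g := by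
    rw [mulVec_mulVec, mul_nonsing_inv _ hM.det_pos.ne'.isUnit, one_mulVec]
  have square (u : κ → ℝ) : u ⬝ᵥ M *ᵥ u + 2 * (g ⬝ᵥ u) + c
      = (u + M⁻¹ *ᵥ g) ⬝ᵥ M *ᵥ (u + M⁻¹ *ᵥ g) + (c - g ⬝ᵥ M⁻¹ *ᵥ g) := by
    rw [hMsymm.add_dotProduct_mulVec_add, hMinv, dotProduct_comm g u, dotProduct_comm (M⁻¹ *ᵥ g) g]
    ring
  refine ⟨⟨-(M⁻¹ *ᵥ g), ?_⟩, ?_⟩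
  · simp only [square, neg_add_cancel, zero_dotProduct, zero_add]
  · rintro _ ⟨u, rfl⟩
    have hnonneg := hM.posSemidef.dotProduct_mulVec_nonneg (u + M⁻¹ *ᵥ g)
    rw [star_trivial] at hnonneg
    simp only [square]
    linarith

end Matrix

section Bellman

variable {ι κ α : Type*} [Fintype ι] [Fintype κ] [CommRing α] {A S : Matrix ι ι α}

lemma bellman_eq_quadratic_in_input (hS : S.IsSymm) (Q : Matrix ι ι α) (B : Matrix ι κ α)
    (E : Matrix ι ι α) (R : Matrix κ κ α) (x v π : ι → α) (u : κ → α) :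
    x ⬝ᵥ Q *ᵥ x + u ⬝ᵥ R *ᵥ u + (A *ᵥ x + B *ᵥ u + v) ⬝ᵥ S *ᵥ (A *ᵥ x + B *ᵥ u + v)
        + 2 * (π ⬝ᵥ E *ᵥ (A *ᵥ x + B *ᵥ u + v))
      = u ⬝ᵥ (Bᵀ * S * B + R) *ᵥ u + 2 * ((Bᵀ *ᵥ (S *ᵥ (A *ᵥ x + v) + Eᵀ *ᵥ π)) ⬝ᵥ u)
        + (x ⬝ᵥ Q *ᵥ x + (A *ᵥ x + v) ⬝ᵥ S *ᵥ (A *ᵥ x + v) + 2 * (π ⬝ᵥ E *ᵥ (A *ᵥ x + v))) := by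
  rw [add_right_comm _ (B *ᵥ u)]
  generalize A *ᵥ x + v = z
  have hSB : z ⬝ᵥ S *ᵥ B *ᵥ u = (Bᵀ *ᵥ S *ᵥ z) ⬝ᵥ u := by
    rw [hS.dotProduct_mulVec_comm, dotProduct_comm,
      dotProduct_mulVec_eq_transpose_mulVec_dotProduct]
  have hBSB : B *ᵥ u ⬝ᵥ S *ᵥ B *ᵥ u = u ⬝ᵥ (Bᵀ * S * B) *ᵥ u := by
    rw [dotProduct_comm, dotProduct_mulVec_eq_transpose_mulVec_dotProduct, dotProduct_comm,
      mulVec_mulVec, mulVec_mulVec, Matrix.mul_assoc]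
  have hEB : π ⬝ᵥ E *ᵥ B *ᵥ u = (Bᵀ *ᵥ Eᵀ *ᵥ π) ⬝ᵥ u := by
    rw [dotProduct_mulVec_eq_transpose_mulVec_dotProduct E,
      dotProduct_mulVec_eq_transpose_mulVec_dotProduct B]
  rw [hS.add_dotProduct_mulVec_add, mulVec_add E, dotProduct_add, hSB,
    hBSB, hEB, add_mulVec, dotProduct_add, mulVec_add Bᵀ, add_dotProduct]
  ring

lemma bellman_minimum_eq_of_riccati (hS : S.IsSymm) {N : Matrix κ κ α} (hN : N.IsSymm)
    {Q : Matrix ι ι α} {B : Matrix ι κ α} (hRic : S = Aᵀ * S * A - Aᵀ * S * B * N * Bᵀ * S * A + Q)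
    {K : Matrix κ ι α} (hK : K = -(N * Bᵀ * S * A)) (E : Matrix ι ι α) (x v π : ι → α) :
    x ⬝ᵥ Q *ᵥ x + (A *ᵥ x + v) ⬝ᵥ S *ᵥ (A *ᵥ x + v) + 2 * (π ⬝ᵥ E *ᵥ (A *ᵥ x + v))
        - (Bᵀ *ᵥ (S *ᵥ (A *ᵥ x + v) + Eᵀ *ᵥ π)) ⬝ᵥ N *ᵥ (Bᵀ *ᵥ (S *ᵥ (A *ᵥ x + v) + Eᵀ *ᵥ π))
      = x ⬝ᵥ S *ᵥ x + 2 * ((Eᵀ *ᵥ π + S *ᵥ v) ⬝ᵥ (A + B * K) *ᵥ x)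
        + (v ⬝ᵥ S *ᵥ v + 2 * (π ⬝ᵥ E *ᵥ v)
          - (Bᵀ *ᵥ (Eᵀ *ᵥ π + S *ᵥ v)) ⬝ᵥ N *ᵥ (Bᵀ *ᵥ (Eᵀ *ᵥ π + S *ᵥ v))) := by
  set L := Bᵀ * S * A
  set p := Eᵀ *ᵥ π + S *ᵥ v
  have hg : Bᵀ *ᵥ (S *ᵥ (A *ᵥ x + v) + Eᵀ *ᵥ π) = L *ᵥ x + Bᵀ *ᵥ p := by
    simp only [L, p, mulVec_add, mulVec_mulVec, Matrix.mul_assoc]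
    abel
  have hRicx : x ⬝ᵥ S *ᵥ x = (A *ᵥ x) ⬝ᵥ S *ᵥ A *ᵥ x - (L *ᵥ x) ⬝ᵥ N *ᵥ L *ᵥ x + x ⬝ᵥ Q *ᵥ x := by
    have hSA : Aᵀ * S * A = Aᵀ * (S * A) := Matrix.mul_assoc _ _ _
    have hLNL : Aᵀ * S * B * N * Bᵀ * S * A = Lᵀ * (N * L) := by
      simp only [L, transpose_mul, transpose_transpose, hS.eq, Matrix.mul_assoc]
    conv_lhs => rw [hRic]
    rw [add_mulVec, sub_mulVec, dotProduct_add, dotProduct_sub, hSA, hLNL,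
      dotProduct_transpose_mul_mulVec, dotProduct_transpose_mul_mulVec, ← mulVec_mulVec x S A,
      ← mulVec_mulVec x N L]
  have hcross : (L *ᵥ x) ⬝ᵥ N *ᵥ Bᵀ *ᵥ p = -(p ⬝ᵥ (B * K) *ᵥ x) := by
    rw [hN.dotProduct_mulVec_comm, ← dotProduct_mulVec_eq_transpose_mulVec_dotProduct, hK]
    simp only [L, Matrix.mul_neg, neg_mulVec, dotProduct_neg, neg_neg, mulVec_mulVec,
      Matrix.mul_assoc]
  have hAv : (A *ᵥ x + v) ⬝ᵥ S *ᵥ (A *ᵥ x + v)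
      = (A *ᵥ x) ⬝ᵥ S *ᵥ A *ᵥ x + 2 * ((S *ᵥ v) ⬝ᵥ A *ᵥ x) + v ⬝ᵥ S *ᵥ v := by
    rw [hS.add_dotProduct_mulVec_add, dotProduct_comm (A *ᵥ x) (S *ᵥ v)]
  have hE : π ⬝ᵥ E *ᵥ (A *ᵥ x + v) = (Eᵀ *ᵥ π) ⬝ᵥ A *ᵥ x + π ⬝ᵥ E *ᵥ v := by
    rw [mulVec_add, dotProduct_add, dotProduct_mulVec_eq_transpose_mulVec_dotProduct E π (A *ᵥ x)]
  have hp : p ⬝ᵥ (A + B * K) *ᵥ x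
      = (Eᵀ *ᵥ π) ⬝ᵥ A *ᵥ x + (S *ᵥ v) ⬝ᵥ A *ᵥ x + p ⬝ᵥ (B * K) *ᵥ x := by
    rw [add_mulVec, dotProduct_add, add_dotProduct]
  rw [hg, hN.add_dotProduct_mulVec_add, hRicx, hcross, hAv, hE, hp]
  ring

end Bellman

theorem stmt14_general
    (n m : ℕ)
    (A : Matrix (Fin n) (Fin n) ℝ) (B : Matrix (Fin n) (Fin m) ℝ)
    (Q S : Matrix (Fin n) (Fin n) ℝ) (R : Matrix (Fin m) (Fin m) ℝ)
    (hR : R.PosDef) (hS : S.PosSemidef)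
    (hRic : S = Aᵀ * S * A - Aᵀ * S * B * (Bᵀ * S * B + R)⁻¹ * Bᵀ * S * A + Q) :
    let K := -((Bᵀ * S * B + R)⁻¹ * Bᵀ * S * A)
    ∀ v piv : Fin n → ℝ, ∃ c : ℝ, ∀ x : Fin n → ℝ,
      IsLeast
        (Set.range (fun u : Fin m → ℝ =>
          x ⬝ᵥ (Q *ᵥ x) + u ⬝ᵥ (R *ᵥ u)
            + (A *ᵥ x + B *ᵥ u + v) ⬝ᵥ (S *ᵥ (A *ᵥ x + B *ᵥ u + v))
            + 2 * (piv ⬝ᵥ ((A + B * K) *ᵥ (A *ᵥ x + B *ᵥ u + v)))))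
        (x ⬝ᵥ (S *ᵥ x)
          + 2 * (((A + B * K)ᵀ *ᵥ piv + S *ᵥ v) ⬝ᵥ ((A + B * K) *ᵥ x)) + c) := by
  intro K v piv
  have hSsymm : S.IsSymm := isHermitian_iff_isSymm.mp hS.isHermitian
  have hM : (Bᵀ * S * B + R).PosDef := PosDef.posSemidef_add (hS.conjTranspose_mul_mul_same B) hR
  have hMinv : (Bᵀ * S * B + R)⁻¹.IsSymm := (isHermitian_iff_isSymm.mp hM.isHermitian).inv
  set E := A + B * K
  set p := Eᵀ *ᵥ piv + S *ᵥ v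
  refine ⟨v ⬝ᵥ S *ᵥ v + 2 * (piv ⬝ᵥ E *ᵥ v) - (Bᵀ *ᵥ p) ⬝ᵥ (Bᵀ * S * B + R)⁻¹ *ᵥ (Bᵀ *ᵥ p),
    fun x => ?_⟩
  simp only [bellman_eq_quadratic_in_input hSsymm]
  rw [← bellman_minimum_eq_of_riccati hSsymm hMinv hRic rfl]
  exact hM.isLeast_quadratic _ _

/-- if `S` solves the discrete algebraic Riccati equation, then for
every `v` and `π` there is a constant `c` (independent of `x`) such that the
minimum over `u` of the one-stage Bellman expression equals
`xᵀSx + 2Πᵀ(A+BK)x + c` with `Π = (A+BK)ᵀπ + Sv`. -/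
theorem stmt14
    (n m : ℕ)
    (A : Matrix (Fin n) (Fin n) ℝ) (B : Matrix (Fin n) (Fin m) ℝ)
    (Q S : Matrix (Fin n) (Fin n) ℝ) (R : Matrix (Fin m) (Fin m) ℝ)
    (hQ : Q.PosSemidef) (hR : R.PosDef) (hS : S.PosSemidef)
    (hRic : S = Aᵀ * S * A - Aᵀ * S * B * (Bᵀ * S * B + R)⁻¹ * Bᵀ * S * A + Q) :
    let K := -((Bᵀ * S * B + R)⁻¹ * Bᵀ * S * A)
    ∀ v piv : Fin n → ℝ, ∃ c : ℝ, ∀ x : Fin n → ℝ,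
      IsLeast
        (Set.range (fun u : Fin m → ℝ =>
          x ⬝ᵥ (Q *ᵥ x) + u ⬝ᵥ (R *ᵥ u)
            + (A *ᵥ x + B *ᵥ u + v) ⬝ᵥ (S *ᵥ (A *ᵥ x + B *ᵥ u + v))
            + 2 * (piv ⬝ᵥ ((A + B * K) *ᵥ (A *ᵥ x + B *ᵥ u + v)))))
        (x ⬝ᵥ (S *ᵥ x)
          + 2 * (((A + B * K)ᵀ *ᵥ piv + S *ᵥ v) ⬝ᵥ ((A + B * K) *ᵥ x)) + c) :=
  stmt14_general n m A B Q S R hR hS hRic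
end

section
/- Consider the linear system x[t+1] = A x[t] + B u[t] + v[t] for t = 0,…,N with given initial state x[0] ∈ ℝ^n and given disturbance sequence v[0],…,v[N] ∈ ℝ^n, and the cost J(u) = Σ_{t=0}^{N} ( x[t]^T Q x[t] + u[t]^T R u[t] ) + x[N+1]^T S x[N+1], where x[·] is the trajectory generated by the control sequence u[0],…,u[N] ∈ ℝ^m. Suppose Q is symmetric positive semidefinite, R symmetric positive definite, and S symmetric positive semidefinite solves the discrete algebraic Riccati equation S = A^T S A − A^T S B (B^T S B + R)^{−1} B^T S A + Q. Define K = −(B^T S B + R)^{−1} B^T S A, K_v = −(B^T S B + R)^{−1} B^T, and the backward recursion Π[N+1] = 0, Π[t] = (A + B K)^T Π[t+1] + S v[t]. Then the control sequence u*[t] = K x*[t] + K_v Π[t] (where x* is the trajectory it generates from x[0]) minimizes J over all control sequences, i.e. J(u*) ≤ J(u) for every sequence u[0],…,u[N]. -/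
/-!
Completing the square. Put `G = BᵀSB + R` and `Vₜ(x) = xᵀSx + 2 ((A + BK)ᵀ Π[t])ᵀx`. The Riccati
equation and the recursion for `Π` turn one step of any trajectory into
`x[t]ᵀQx[t] + u[t]ᵀRu[t] + Vₜ₊₁(x[t+1]) = Vₜ(x[t]) + ‖u[t] - K x[t] - Kᵥ Π[t]‖²_G + cₜ`
with `cₜ` independent of the controls, and `V_{N+1}(x) = xᵀSx` since `Π[N+1] = 0`. Telescoping,
`J(u) = V₀(x[0]) + Σ cₜ + Σ ‖u[t] - K x[t] - Kᵥ Π[t]‖²_G`: the last sum vanishes for `u*` and is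
nonnegative for every `u` because `G` is positive definite.
-/

open Matrix Finset

theorem Matrix.IsSymm.transpose_mul_mul {α m n : Type*} [CommSemiring α] [Fintype n]
    {S : Matrix n n α} (hS : S.IsSymm) (B : Matrix n m α) :
    (Bᵀ * S * B).IsSymm := by
  simp only [IsSymm, transpose_mul, transpose_transpose, hS.eq, Matrix.mul_assoc]

section
variable {α : Type*} [CommRing α] {m n : Type*} [Fintype m] [Fintype n]

theorem mulVec_dotProduct (M : Matrix m n α) (x : n → α) (y : m → α) :
    (M *ᵥ x) ⬝ᵥ y = x ⬝ᵥ (Mᵀ *ᵥ y) := by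
  rw [dotProduct_comm, dotProduct_transpose_mulVec]

theorem dotProduct_mulVec_add_two_mul_dotProduct [DecidableEq m] {G : Matrix m m α}
    (hG : G.IsSymm) (hu : IsUnit G.det) (b h : m → α) :
    b ⬝ᵥ (G *ᵥ b) + 2 * (h ⬝ᵥ b) =
      (b + G⁻¹ *ᵥ h) ⬝ᵥ (G *ᵥ (b + G⁻¹ *ᵥ h)) - h ⬝ᵥ (G⁻¹ *ᵥ h) := by
  have hc : G *ᵥ (G⁻¹ *ᵥ h) = h := by rw [mulVec_mulVec, mul_nonsing_inv _ hu, one_mulVec]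
  have hsymm : (G⁻¹ *ᵥ h) ⬝ᵥ (G *ᵥ b) = h ⬝ᵥ b := by
    rw [← dotProduct_transpose_mulVec, hG.eq, hc, dotProduct_comm]
  rw [mulVec_add, hc, add_dotProduct, dotProduct_add, dotProduct_add, hsymm]
  linear_combination dotProduct_comm h b + dotProduct_comm h (G⁻¹ *ᵥ h)

def lqValue (S : Matrix n n α) (p x : n → α) : α := x ⬝ᵥ (S *ᵥ x) + 2 * (p ⬝ᵥ x)

theorem lqValue_add {S : Matrix n n α} (hS : S.IsSymm) (p x y : n → α) :
    lqValue S p (x + y) = lqValue S p x + y ⬝ᵥ (S *ᵥ y) + 2 * ((S *ᵥ x + p) ⬝ᵥ y) := by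
  have : x ⬝ᵥ (S *ᵥ y) = (S *ᵥ x) ⬝ᵥ y := by rw [mulVec_dotProduct, hS.eq]
  simp only [lqValue, mulVec_add, dotProduct_add, add_dotProduct, this]
  linear_combination dotProduct_comm y (S *ᵥ x)

theorem lqValue_add_mulVec {S : Matrix n n α} (hS : S.IsSymm) (B : Matrix n m α)
    (p y : n → α) (b : m → α) :
    lqValue S p (y + B *ᵥ b) =
      lqValue S p y + b ⬝ᵥ ((Bᵀ * S * B) *ᵥ b) + 2 * ((Bᵀ *ᵥ (S *ᵥ y + p)) ⬝ᵥ b) := by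
  rw [lqValue_add hS, mulVec_dotProduct, mulVec_dotProduct, transpose_transpose, mulVec_mulVec,
    mulVec_mulVec]

-- The left side is the minimum over `b` of the left side of `stageCost_add_lqValue_eq`.
theorem dotProduct_mulVec_add_lqValue_sub_eq_of_riccati [DecidableEq m] {A S Q : Matrix n n α}
    {B : Matrix n m α} {R : Matrix m m α} {K : Matrix m n α} (hS : S.IsSymm) (hR : R.IsSymm)
    (hRic : S = Aᵀ * S * A - Aᵀ * S * B * (Bᵀ * S * B + R)⁻¹ * Bᵀ * S * A + Q)
    (hK : K = -((Bᵀ * S * B + R)⁻¹ * Bᵀ * S * A)) {P q w : n → α} (hP : P = q + S *ᵥ w)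
    (a : n → α) :
    a ⬝ᵥ (Q *ᵥ a) + lqValue S q (A *ᵥ a + w)
        - (Bᵀ *ᵥ (S *ᵥ (A *ᵥ a) + P)) ⬝ᵥ ((Bᵀ * S * B + R)⁻¹ *ᵥ (Bᵀ *ᵥ (S *ᵥ (A *ᵥ a) + P))) =
      lqValue S ((A + B * K)ᵀ *ᵥ P) a
        + (2 * (P ⬝ᵥ w) - w ⬝ᵥ (S *ᵥ w) - P ⬝ᵥ ((B * (Bᵀ * S * B + R)⁻¹ * Bᵀ) *ᵥ P)) := by
  set M := B * (Bᵀ * S * B + R)⁻¹ * Bᵀ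
  have hMs : M.IsSymm := by
    simpa only [transpose_transpose] using
      ((hS.transpose_mul_mul B).add hR).inv.transpose_mul_mul Bᵀ
  set e := S *ᵥ (A *ᵥ a)
  have hQ : a ⬝ᵥ (Q *ᵥ a) = a ⬝ᵥ (S *ᵥ a) - (A *ᵥ a) ⬝ᵥ e + e ⬝ᵥ (M *ᵥ e) := by
    have hQmat : Q = S - Aᵀ * S * A + Aᵀ * S * B * (Bᵀ * S * B + R)⁻¹ * Bᵀ * S * A := by
      nth_rewrite 1 [hRic]; abel
    simp only [hQmat, e, M, add_mulVec, sub_mulVec, dotProduct_add, dotProduct_sub,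
      mulVec_dotProduct, ← mulVec_mulVec, hS.eq]
  have hfeedback : ((A + B * K)ᵀ *ᵥ P) ⬝ᵥ a = P ⬝ᵥ (A *ᵥ a) - P ⬝ᵥ (M *ᵥ e) := by
    simp only [mulVec_dotProduct, transpose_transpose, hK, e, M, add_mulVec, Matrix.mul_neg,
      neg_mulVec, dotProduct_add, dotProduct_neg, ← mulVec_mulVec, Matrix.mul_assoc]
    ring
  have hsubtracted : (Bᵀ *ᵥ (e + P)) ⬝ᵥ ((Bᵀ * S * B + R)⁻¹ *ᵥ (Bᵀ *ᵥ (e + P))) =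
      e ⬝ᵥ (M *ᵥ e) + 2 * (P ⬝ᵥ (M *ᵥ e)) + P ⬝ᵥ (M *ᵥ P) := by
    have hMsymm : e ⬝ᵥ (M *ᵥ P) = P ⬝ᵥ (M *ᵥ e) := by
      rw [← dotProduct_transpose_mulVec, hMs.eq]
    have hM : (Bᵀ *ᵥ (e + P)) ⬝ᵥ ((Bᵀ * S * B + R)⁻¹ *ᵥ (Bᵀ *ᵥ (e + P))) =
        (e + P) ⬝ᵥ (M *ᵥ (e + P)) := by
      simp only [M, mulVec_dotProduct, transpose_transpose, ← mulVec_mulVec]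
    rw [hM, mulVec_add, dotProduct_add, add_dotProduct, add_dotProduct, hMsymm]
    ring
  have hPz : P ⬝ᵥ (A *ᵥ a) = q ⬝ᵥ (A *ᵥ a) + e ⬝ᵥ w := by
    rw [hP, add_dotProduct, mulVec_dotProduct, hS.eq, dotProduct_comm w]
  have hPw : P ⬝ᵥ w = q ⬝ᵥ w + w ⬝ᵥ (S *ᵥ w) := by
    rw [hP, add_dotProduct, dotProduct_comm (S *ᵥ w)]
  rw [hQ, hsubtracted, lqValue_add hS, lqValue, lqValue, hfeedback, add_dotProduct]
  linear_combination -2 * hPz - 2 * hPw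

theorem stageCost_add_lqValue_eq [DecidableEq m] {A S Q : Matrix n n α} {B : Matrix n m α}
    {R : Matrix m m α} {K Kv : Matrix m n α} (hS : S.IsSymm) (hR : R.IsSymm)
    (hG : IsUnit (Bᵀ * S * B + R).det)
    (hRic : S = Aᵀ * S * A - Aᵀ * S * B * (Bᵀ * S * B + R)⁻¹ * Bᵀ * S * A + Q)
    (hK : K = -((Bᵀ * S * B + R)⁻¹ * Bᵀ * S * A)) (hKv : Kv = -((Bᵀ * S * B + R)⁻¹ * Bᵀ))
    {P q w : n → α} (hP : P = q + S *ᵥ w) (a : n → α) (b : m → α) :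
    a ⬝ᵥ (Q *ᵥ a) + b ⬝ᵥ (R *ᵥ b) + lqValue S q (A *ᵥ a + B *ᵥ b + w) =
      lqValue S ((A + B * K)ᵀ *ᵥ P) a
        + (b - (K *ᵥ a + Kv *ᵥ P)) ⬝ᵥ ((Bᵀ * S * B + R) *ᵥ (b - (K *ᵥ a + Kv *ᵥ P)))
        + (2 * (P ⬝ᵥ w) - w ⬝ᵥ (S *ᵥ w) - P ⬝ᵥ ((B * (Bᵀ * S * B + R)⁻¹ * Bᵀ) *ᵥ P)) := by
  set G := Bᵀ * S * B + R with hGdef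
  set h := Bᵀ *ᵥ (S *ᵥ (A *ᵥ a) + P)
  have hcontrol : K *ᵥ a + Kv *ᵥ P = -(G⁻¹ *ᵥ h) := by
    simp only [h, hK, hKv, neg_mulVec, mulVec_add, mulVec_mulVec, Matrix.mul_assoc, neg_add]
  have hlin : S *ᵥ (A *ᵥ a + w) + q = S *ᵥ (A *ᵥ a) + P := by
    rw [mulVec_add, hP]; abel
  have hexpand : b ⬝ᵥ (R *ᵥ b) + lqValue S q (A *ᵥ a + B *ᵥ b + w) =
      lqValue S q (A *ᵥ a + w) + (b ⬝ᵥ (G *ᵥ b) + 2 * (h ⬝ᵥ b)) := by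
    rw [add_right_comm, lqValue_add_mulVec hS, hlin, hGdef, add_mulVec, dotProduct_add]
    ring
  rw [add_assoc, hexpand, dotProduct_mulVec_add_two_mul_dotProduct ((hS.transpose_mul_mul B).add hR)
    hG, hcontrol, sub_neg_eq_add]
  linear_combination dotProduct_mulVec_add_lqValue_sub_eq_of_riccati hS hR hRic hK hP a

theorem sum_range_add_eq_add_sum_of_step {M : Type*} [AddCommMonoid M] {c d V : ℕ → M} :
    ∀ {N : ℕ}, (∀ t ≤ N, c t + V (t + 1) = V t + d t) →
      ∑ t ∈ range (N + 1), c t + V (N + 1) = V 0 + ∑ t ∈ range (N + 1), d t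
  | 0, h => by simpa using h 0 le_rfl
  | N + 1, h => by
    rw [sum_range_succ, add_assoc, h (N + 1) le_rfl, ← add_assoc,
      sum_range_add_eq_add_sum_of_step fun t ht => h t (ht.trans N.le_succ), add_assoc,
      ← sum_range_succ]

def lqCost (Q S : Matrix n n α) (R : Matrix m m α) (N : ℕ) (x : ℕ → n → α) (u : ℕ → m → α) : α :=
  (∑ t ∈ range (N + 1), (x t ⬝ᵥ (Q *ᵥ x t) + u t ⬝ᵥ (R *ᵥ u t))) + x (N + 1) ⬝ᵥ (S *ᵥ x (N + 1))

theorem lqCost_eq [DecidableEq m] {A S Q : Matrix n n α} {B : Matrix n m α}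
    {R : Matrix m m α} {K Kv : Matrix m n α} (hS : S.IsSymm) (hR : R.IsSymm)
    (hG : IsUnit (Bᵀ * S * B + R).det)
    (hRic : S = Aᵀ * S * A - Aᵀ * S * B * (Bᵀ * S * B + R)⁻¹ * Bᵀ * S * A + Q)
    (hK : K = -((Bᵀ * S * B + R)⁻¹ * Bᵀ * S * A)) (hKv : Kv = -((Bᵀ * S * B + R)⁻¹ * Bᵀ))
    {N : ℕ} {v Pi : ℕ → n → α} (hPiN : Pi (N + 1) = 0)
    (hPi : ∀ t ≤ N, Pi t = (A + B * K)ᵀ *ᵥ Pi (t + 1) + S *ᵥ v t)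
    {x : ℕ → n → α} {u : ℕ → m → α} (hx : ∀ t ≤ N, x (t + 1) = A *ᵥ x t + B *ᵥ u t + v t) :
    lqCost Q S R N x u = lqValue S ((A + B * K)ᵀ *ᵥ Pi 0) (x 0)
      + ∑ t ∈ range (N + 1), (u t - (K *ᵥ x t + Kv *ᵥ Pi t)) ⬝ᵥ
          ((Bᵀ * S * B + R) *ᵥ (u t - (K *ᵥ x t + Kv *ᵥ Pi t)))
      + ∑ t ∈ range (N + 1), (2 * (Pi t ⬝ᵥ v t) - v t ⬝ᵥ (S *ᵥ v t)
          - Pi t ⬝ᵥ ((B * (Bᵀ * S * B + R)⁻¹ * Bᵀ) *ᵥ Pi t)) := by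
  have hterminal : x (N + 1) ⬝ᵥ (S *ᵥ x (N + 1)) =
      lqValue S ((A + B * K)ᵀ *ᵥ Pi (N + 1)) (x (N + 1)) := by
    simp [lqValue, hPiN]
  rw [lqCost, hterminal, add_assoc, ← sum_add_distrib]
  refine sum_range_add_eq_add_sum_of_step (V := fun t ↦ lqValue S ((A + B * K)ᵀ *ᵥ Pi t) (x t))
    fun t ht ↦ ?_
  rw [hx t ht, stageCost_add_lqValue_eq hS hR hG hRic hK hKv (hPi t ht), add_assoc]
end

theorem stmt15_general
    (n m N : ℕ)
    (A : Matrix (Fin n) (Fin n) ℝ) (B : Matrix (Fin n) (Fin m) ℝ)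
    (Q S : Matrix (Fin n) (Fin n) ℝ) (R : Matrix (Fin m) (Fin m) ℝ)
    (hR : R.PosDef) (hS : S.PosSemidef)
    (hRic : S = Aᵀ * S * A - Aᵀ * S * B * (Bᵀ * S * B + R)⁻¹ * Bᵀ * S * A + Q)
    (x0 : Fin n → ℝ) (v : ℕ → Fin n → ℝ)
    (K : Matrix (Fin m) (Fin n) ℝ) (Kv : Matrix (Fin m) (Fin n) ℝ)
    (hK : K = -((Bᵀ * S * B + R)⁻¹ * Bᵀ * S * A))
    (hKv : Kv = -((Bᵀ * S * B + R)⁻¹ * Bᵀ))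
    (Pi : ℕ → Fin n → ℝ)
    (hPiN : Pi (N + 1) = 0)
    (hPi : ∀ t, t ≤ N → Pi t = (A + B * K)ᵀ *ᵥ Pi (t + 1) + S *ᵥ v t)
    (J : (ℕ → Fin n → ℝ) → (ℕ → Fin m → ℝ) → ℝ)
    (hJ : ∀ x u, J x u
      = (∑ t ∈ Finset.range (N + 1), (x t ⬝ᵥ (Q *ᵥ x t) + u t ⬝ᵥ (R *ᵥ u t)))
        + x (N + 1) ⬝ᵥ (S *ᵥ x (N + 1)))
    (xs : ℕ → Fin n → ℝ) (us : ℕ → Fin m → ℝ)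
    (hxs0 : xs 0 = x0)
    (hus : ∀ t, t ≤ N → us t = K *ᵥ xs t + Kv *ᵥ Pi t)
    (hxs : ∀ t, t ≤ N → xs (t + 1) = A *ᵥ xs t + B *ᵥ us t + v t) :
    ∀ (x : ℕ → Fin n → ℝ) (u : ℕ → Fin m → ℝ),
      x 0 = x0 →
      (∀ t, t ≤ N → x (t + 1) = A *ᵥ x t + B *ᵥ u t + v t) →
      J xs us ≤ J x u := by
  intro x u hx0 hx
  have hSs : S.IsSymm := isHermitian_iff_isSymm.mp hS.isHermitian
  have hRs : R.IsSymm := isHermitian_iff_isSymm.mp hR.isHermitian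
  have hGpos : (Bᵀ * S * B + R).PosDef := by
    refine PosDef.posSemidef_add ?_ hR
    simpa using hS.conjTranspose_mul_mul_same B
  have hG : IsUnit (Bᵀ * S * B + R).det := hGpos.det_pos.ne'.isUnit
  rw [hJ, hJ, ← lqCost, ← lqCost, lqCost_eq hSs hRs hG hRic hK hKv hPiN hPi hxs,
    lqCost_eq hSs hRs hG hRic hK hKv hPiN hPi hx, hxs0, hx0]
  have hgap_opt : ∀ t ∈ range (N + 1), (us t - (K *ᵥ xs t + Kv *ᵥ Pi t)) ⬝ᵥ
      ((Bᵀ * S * B + R) *ᵥ (us t - (K *ᵥ xs t + Kv *ᵥ Pi t))) = 0 := fun t ht ↦ by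
    rw [hus t (Nat.lt_succ_iff.mp (mem_range.mp ht)), sub_self, zero_dotProduct]
  have hgap_nonneg : 0 ≤ ∑ t ∈ range (N + 1), (u t - (K *ᵥ x t + Kv *ᵥ Pi t)) ⬝ᵥ
      ((Bᵀ * S * B + R) *ᵥ (u t - (K *ᵥ x t + Kv *ᵥ Pi t))) :=
    sum_nonneg fun t _ ↦ by
      simpa only [star_trivial] using hGpos.posSemidef.dotProduct_mulVec_nonneg _
  rw [sum_eq_zero hgap_opt]
  linarith

/-- finite-horizon LQ optimal control with a known disturbance
sequence `v`: the control `u*[t] = K x*[t] + Kᵥ Π[t]`, with `Π` given by the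
backward recursion `Π[N+1] = 0`, `Π[t] = (A+BK)ᵀΠ[t+1] + S v[t]`, minimizes
`J(u) = Σ_{t=0}^{N} (x[t]ᵀQx[t] + u[t]ᵀRu[t]) + x[N+1]ᵀSx[N+1]` over all
control sequences. -/
theorem stmt15
    (n m N : ℕ)
    (A : Matrix (Fin n) (Fin n) ℝ) (B : Matrix (Fin n) (Fin m) ℝ)
    (Q S : Matrix (Fin n) (Fin n) ℝ) (R : Matrix (Fin m) (Fin m) ℝ)
    (hQ : Q.PosSemidef) (hR : R.PosDef) (hS : S.PosSemidef)
    (hRic : S = Aᵀ * S * A - Aᵀ * S * B * (Bᵀ * S * B + R)⁻¹ * Bᵀ * S * A + Q)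
    (x0 : Fin n → ℝ) (v : ℕ → Fin n → ℝ)
    (K : Matrix (Fin m) (Fin n) ℝ) (Kv : Matrix (Fin m) (Fin n) ℝ)
    (hK : K = -((Bᵀ * S * B + R)⁻¹ * Bᵀ * S * A))
    (hKv : Kv = -((Bᵀ * S * B + R)⁻¹ * Bᵀ))
    (Pi : ℕ → Fin n → ℝ)
    (hPiN : Pi (N + 1) = 0)
    (hPi : ∀ t, t ≤ N → Pi t = (A + B * K)ᵀ *ᵥ Pi (t + 1) + S *ᵥ v t)
    (J : (ℕ → Fin n → ℝ) → (ℕ → Fin m → ℝ) → ℝ)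
    (hJ : ∀ x u, J x u
      = (∑ t ∈ Finset.range (N + 1), (x t ⬝ᵥ (Q *ᵥ x t) + u t ⬝ᵥ (R *ᵥ u t)))
        + x (N + 1) ⬝ᵥ (S *ᵥ x (N + 1)))
    (xs : ℕ → Fin n → ℝ) (us : ℕ → Fin m → ℝ)
    (hxs0 : xs 0 = x0)
    (hus : ∀ t, t ≤ N → us t = K *ᵥ xs t + Kv *ᵥ Pi t)
    (hxs : ∀ t, t ≤ N → xs (t + 1) = A *ᵥ xs t + B *ᵥ us t + v t) :
    ∀ (x : ℕ → Fin n → ℝ) (u : ℕ → Fin m → ℝ),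
      x 0 = x0 →
      (∀ t, t ≤ N → x (t + 1) = A *ᵥ x t + B *ᵥ u t + v t) →
      J xs us ≤ J x u :=
  stmt15_general n m N A B Q S R hR hS hRic x0 v K Kv hK hKv Pi hPiN hPi J hJ xs us hxs0 hus hxs
end
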